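/- Let G be a single-decision causal influence diagram and X a variable of G other than the decision D. If G contains a directed path of the form D ⇝ X ⇝ U for some utility node U, then there exists a SCIM compatible with G that has a control incentive on X. -/

import Mathlib

attribute [local instance] Classical.propDecidable

noncomputable section

/-! ### d-separation in a directed graph -/

/-- `b` is a collider on a path segment `a - b - c`. -/
def IsCollider {V : Type} (E : V → V → Prop) (a b c : V) : Prop := E a b ∧ E c b

/-- The triple `a - b - c` on an undirected path blocks the path w.r.t. `Z`:
either the middle node is a non-collider (chain or fork) belonging to `Z`, or it is a
collider such that neither it nor any of its descendants belongs to `Z`. -/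
def BlockedTriple {V : Type} (E : V → V → Prop) (Z : Set V) (a b c : V) : Prop :=
  (¬ IsCollider E a b c ∧ b ∈ Z) ∨
    (IsCollider E a b c ∧ ∀ w, Relation.ReflTransGen E b w → w ∉ Z)

/-- An undirected path: a nonempty list of distinct vertices in which consecutive
vertices are joined by an edge in one direction or the other. -/
def IsUPath {V : Type} (E : V → V → Prop) (p : List V) : Prop :=
  p ≠ [] ∧ p.Nodup ∧ p.Chain' (fun a b => E a b ∨ E b a)

/-- A path is d-separated (blocked) by `Z` if some consecutive triple blocks it. -/
def BlockedPath {V : Type} (E : V → V → Prop) (Z : Set V) (p : List V) : Prop :=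
  ∃ l₁ a b c l₂, p = l₁ ++ a :: b :: c :: l₂ ∧ BlockedTriple E Z a b c

/-- `Z` d-separates the node sets `S` and `T`: every undirected path from a node of `S`
to a node of `T` is blocked by `Z`. -/
def DSep {V : Type} (E : V → V → Prop) (S T Z : Set V) : Prop :=
  ∀ p : List V, IsUPath E p → (∃ s ∈ S, p.head? = some s) →
    (∃ t ∈ T, p.getLast? = some t) → BlockedPath E Z p

/-! ### Causal influence diagrams and structural causal influence models -/

/-- A single-decision causal influence diagram: a finite DAG whose vertices are
partitioned into structure nodes, one decision node and utility nodes
(the utility nodes having no children). -/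
structure CID (V : Type) where
  edge : V → V → Prop
  acyclic : ∀ v, ¬ Relation.TransGen edge v v
  decision : V
  utility : Finset V
  decision_not_utility : decision ∉ utility
  utility_no_children : ∀ u ∈ utility, ∀ v, ¬ edge u v

/-- A (single-decision) structural causal influence model over a CID: finite nonempty
domains for every variable, one finite-domain exogenous variable per variable, structural
functions for every non-decision variable, real-valued (injectively embedded, i.e. the
domain is a subset of ℝ) utility variables, and mutually independent exogenous
distributions. -/
structure SCIM (V : Type) extends CID V where
  dom : V → Type
  dom_fintype : ∀ v, Fintype (dom v)
  dom_nonempty : ∀ v, Nonempty (dom v)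
  edom : V → Type
  edom_fintype : ∀ v, Fintype (edom v)
  edom_nonempty : ∀ v, Nonempty (edom v)
  utilVal : ∀ v, dom v → ℝ
  utilVal_inj : ∀ v ∈ utility, Function.Injective (utilVal v)
  f : ∀ v, v ≠ decision → (∀ w, edge w v → dom w) → edom v → dom v
  μ : ∀ v, edom v → ℝ
  μ_nonneg : ∀ v e, 0 ≤ μ v e
  μ_sum : ∀ v, ∑ e ∈ @Finset.univ (edom v) (edom_fintype v), μ v e = 1

variable {V : Type} [Fintype V] [DecidableEq V]

instance (M : SCIM V) (v : V) : Fintype (M.dom v) := M.dom_fintype v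
instance (M : SCIM V) (v : V) : Nonempty (M.dom v) := M.dom_nonempty v
instance (M : SCIM V) (v : V) : Fintype (M.edom v) := M.edom_fintype v
instance (M : SCIM V) (v : V) : Nonempty (M.edom v) := M.edom_nonempty v

namespace SCIM

variable (M : SCIM V)

/-- A joint setting of the exogenous variables. -/
abbrev Env := ∀ v, M.edom v

/-- Joint probability of an exogenous setting (the exogenous variables are independent). -/
def prob (ε : M.Env) : ℝ := ∏ v, M.μ v (ε v)

/-- The type of structural mechanisms for the vertex `v`. -/
def Mechanism (v : V) : Type := (∀ w, M.edge w v → M.dom w) → M.edom v → M.dom v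

/-- A policy: a structural function for the decision node. -/
abbrev Policy := M.Mechanism M.decision

theorem edge_wf : WellFounded M.edge := by
  haveI : IsTrans V (Relation.TransGen M.edge) := ⟨fun _ _ _ h h' => h.trans h'⟩
  haveI : IsIrrefl V (Relation.TransGen M.edge) := ⟨M.acyclic⟩
  exact Subrelation.wf (fun h => Relation.TransGen.single h)
    (Finite.wellFounded_of_trans_of_irrefl _)

/-- The unique solution of the structural equations `mech` given exogenous setting `ε`. -/
def solve (mech : ∀ v, M.Mechanism v) (ε : M.Env) : ∀ v, M.dom v :=
  WellFounded.fix (C := fun v => M.dom v) M.edge_wf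
    (fun v IH => mech v (fun w hw => IH w hw) (ε v))

/-- The mechanisms of the SCM `M_π` obtained by fixing the policy `π`. -/
def polMech (π : M.Policy) : ∀ v, M.Mechanism v :=
  fun v => if h : v = M.decision then cast (congrArg M.Mechanism h).symm π else M.f v h

/-- Apply an intervention (a partial assignment `ι` of values) to mechanisms:
intervened variables are set to constants. -/
def doMech (mech : ∀ v, M.Mechanism v) (ι : ∀ v, Option (M.dom v)) : ∀ v, M.Mechanism v :=
  fun v => match ι v with
    | some x => fun _ _ => x
    | none => mech v

/-- The single intervention `do(X = x)` as a partial assignment. -/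
def single (X : V) (x : M.dom X) : ∀ v, Option (M.dom v) :=
  fun v => if h : v = X then some (cast (congrArg M.dom h).symm x) else none

/-- The value `W(ε)` of each variable in `M_π`. -/
def val (π : M.Policy) (ε : M.Env) : ∀ v, M.dom v := M.solve (M.polMech π) ε

/-- The potential response: the value of each variable in the submodel of `M_π`
given by the intervention `ι`. -/
def valDo (π : M.Policy) (ι : ∀ v, Option (M.dom v)) (ε : M.Env) : ∀ v, M.dom v :=
  M.solve (M.doMech (M.polMech π) ι) ε

/-- Total utility of an assignment of values to the variables. -/
def totUtil (a : ∀ v, M.dom v) : ℝ := ∑ v ∈ M.utility, M.utilVal v (a v)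

/-- Expected total utility of the policy `π`. -/
def EU (π : M.Policy) : ℝ := ∑ ε : M.Env, M.prob ε * M.totUtil (M.val π ε)

/-- An optimal policy maximizes expected total utility. -/
def Optimal (π : M.Policy) : Prop := ∀ π' : M.Policy, M.EU π' ≤ M.EU π

/-- A decision context: a joint value of the parents of the decision. -/
abbrev Ctx := ∀ w, M.edge w M.decision → M.dom w

/-- The decision context realized by the exogenous setting `ε` in `M_π`. -/
def ctx (π : M.Policy) (ε : M.Env) : M.Ctx := fun w _ => M.val π ε w

/-- Probability of a decision context in `M_π`. -/
def ctxProb (π : M.Policy) (pa : M.Ctx) : ℝ :=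
  ∑ ε : M.Env, if M.ctx π ε = pa then M.prob ε else 0

/-- Conditional expectation of `g` given the decision context `pa` in `M_π`. -/
def condExp (π : M.Policy) (pa : M.Ctx) (g : M.Env → ℝ) : ℝ :=
  (∑ ε : M.Env, if M.ctx π ε = pa then M.prob ε * g ε else 0) / M.ctxProb π pa

/-- The nested potential response `𝒰_{X_d}(ε)`: total utility when `X` is set to the
value it would take under `do(D = d)`, everything else following `M_π`. -/
def nestedU (π : M.Policy) (X : V) (d : M.dom M.decision) (ε : M.Env) : ℝ :=
  M.totUtil (M.valDo π (M.single X (M.valDo π (M.single M.decision d) ε X)) ε)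

/-- Control incentive on `X`: under every optimal policy, in some positive-probability
decision context some alternative decision `d` changes expected utility through `X`. -/
def ControlIncentive (X : V) : Prop :=
  ∀ π : M.Policy, M.Optimal π →
    ∃ pa : M.Ctx, 0 < M.ctxProb π pa ∧ ∃ d : M.dom M.decision,
      M.condExp π pa (M.nestedU π X d) ≠
        M.condExp π pa (fun ε => M.totUtil (M.val π ε))

/-- Response incentive on `X`: under every optimal policy some intervention on `X`
changes the decision for some exogenous setting. -/
def ResponseIncentive (X : V) : Prop :=
  ∀ π : M.Policy, M.Optimal π →
    ∃ (x : M.dom X) (ε : M.Env),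
      M.valDo π (M.single X x) ε M.decision ≠ M.val π ε M.decision

/-- Conditional probability of `event` given `cond` in `M_π`. -/
def cprob (π : M.Policy) (event cond : M.Env → Prop) : ℝ :=
  (∑ ε : M.Env, if cond ε ∧ event ε then M.prob ε else 0) /
    (∑ ε : M.Env, if cond ε then M.prob ε else 0)

/-- Counterfactual fairness of a policy `π` with respect to a protected attribute `A`:
conditional on any positive-probability decision context and value of `A`, intervening
on `A` does not change the distribution of the decision. -/
def CFair (π : M.Policy) (A : V) : Prop :=
  ∀ (d : M.dom M.decision) (pa : M.Ctx) (a a' : M.dom A),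
    (0 < ∑ ε : M.Env, if M.ctx π ε = pa ∧ M.val π ε A = a then M.prob ε else 0) →
      M.cprob π (fun ε => M.valDo π (M.single A a') ε M.decision = d)
          (fun ε => M.ctx π ε = pa ∧ M.val π ε A = a) =
        M.cprob π (fun ε => M.val π ε M.decision = d)
          (fun ε => M.ctx π ε = pa ∧ M.val π ε A = a)

/-- Expected value of the sum of utility variables in `S`. -/
def EUOn (S : Finset V) (π : M.Policy) : ℝ :=
  ∑ ε : M.Env, M.prob ε * ∑ v ∈ S, M.utilVal v (M.val π ε v)

/-- The policy obtained from `π` by replacing the observations of the decision-parents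
that are descendants of `X` by the fixed values `p`. -/
def modPolicy (π : M.Policy) (X : V) (p : M.Ctx) : M.Policy :=
  fun pa e =>
    π (fun w hw => if Relation.ReflTransGen M.edge X w then p w hw else pa w hw) e

end SCIM

/-- The graphical criterion for control incentives: a directed path `D ⇝ X ⇝ U`
for some utility node `U`. -/
def CICriterion {V : Type} (G : CID V) (X : V) : Prop :=
  Relation.ReflTransGen G.edge G.decision X ∧
    ∃ u ∈ G.utility, Relation.ReflTransGen G.edge X u

/-- The graphical criterion for response incentives: a directed path from `X` to some
parent `W` of the decision `D`, a directed path from `D` to some utility node `U`, and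
`W` d-connected to `U` given `({D} ∪ Pa_D) \ {W}`. -/
def RICriterion {V : Type} (G : CID V) (X : V) : Prop :=
  ∃ W, G.edge W G.decision ∧ ∃ u ∈ G.utility,
    Relation.ReflTransGen G.edge X W ∧
    Relation.ReflTransGen G.edge G.decision u ∧
    ¬ DSep G.edge {W} {u} (({G.decision} ∪ {w | G.edge w G.decision}) \ {W})

end

/-!
Fix a directed path `D ⇝ X ⇝ U` and take the noiseless Boolean model on `G` in which every vertex
of the path copies its predecessor on the path, every other non-decision vertex is `false`, and a
utility variable is worth `1` when `true`. The decision context is then constantly `false`, the only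
utility variable that can be `true` is `U`, and `U` takes the value of `D`; so an optimal policy
chooses `true` and earns `1`. Under `do(D = false)` the variable `X` is `false`, and setting `X` to
`false` makes `U` false: the nested potential response `𝒰_{X_false}` is `0 ≠ 1`.
-/

open Relation

/-- `P` is the edge relation of a directed `r`-path from `a` to `b`: a subrelation of `r` in
which every vertex has at most one predecessor and every edge lies on a `P`-path from `a` to `b`. -/
structure IsPathRel {α : Type*} (r P : α → α → Prop) (a b : α) : Prop where
  le : P ≤ r
  pred_unique : ∀ {w w' v}, P w v → P w' v → w = w'
  mem_path : ∀ {w v}, P w v → ReflTransGen P a w ∧ ReflTransGen P v b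
  reach : ReflTransGen P a b

namespace IsPathRel

variable {α : Type*} {r P : α → α → Prop} {a b c : α}

theorem transGen_of_rel (h : IsPathRel r P a b) {w v : α} (hwv : P w v) : TransGen r a v :=
  TransGen.mono h.le _ _ (.tail' (h.mem_path hwv).1 hwv)

theorem ne_of_transGen (h : IsPathRel r P a b) (hr : ∀ v, ¬ TransGen r v v) {x y : α}
    (hxy : TransGen P x y) : y ≠ x := by
  rintro rfl
  exact hr y (TransGen.mono h.le _ _ hxy)

theorem reflTransGen_end (h : IsPathRel r P a c) (hab : ReflTransGen P a b) :
    ReflTransGen P b c := by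
  rcases hab.cases_tail with rfl | ⟨w, -, hwb⟩
  · exact h.reach
  · exact (h.mem_path hwb).2

theorem eq_of_reflTransGen_of_sink (h : IsPathRel r P a b) {v : α} (hvb : ReflTransGen P v b)
    (hv : ∀ x, ¬ r v x) : v = b :=
  hvb.cases_head.resolve_right fun ⟨x, hvx, _⟩ => hv x (h.le _ _ hvx)

theorem nil (a : α) : IsPathRel r (fun _ _ => False) a a where
  le _ _ := False.elim
  pred_unique h := h.elim
  mem_path h := h.elim
  reach := .refl

theorem cons (hr : ∀ v, ¬ TransGen r v v) {a' : α} (h : IsPathRel r P a' b) (haa' : r a a') :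
    IsPathRel r (fun w v => P w v ∨ w = a ∧ v = a') a b := by
  set Q : α → α → Prop := fun w v => P w v ∨ w = a ∧ v = a'
  have hPQ : ∀ {x y}, ReflTransGen P x y → ReflTransGen Q x y :=
    ReflTransGen.mono (fun _ _ => Or.inl) _ _
  have hQ : Q a a' := .inr ⟨rfl, rfl⟩
  have hnot : ∀ {w}, ¬ P w a' := fun hw => hr a' (h.transGen_of_rel hw)
  refine ⟨?_, ?_, ?_, ReflTransGen.head hQ (hPQ h.reach)⟩
  · rintro w v (hwv | ⟨rfl, rfl⟩)
    exacts [h.le _ _ hwv, haa']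
  · rintro w w' v (hwv | ⟨rfl, rfl⟩) (hw'v | ⟨rfl, hv⟩)
    exacts [h.pred_unique hwv hw'v, (hnot (hv ▸ hwv)).elim, (hnot hw'v).elim, rfl]
  · rintro w v (hwv | ⟨rfl, rfl⟩)
    · exact ⟨ReflTransGen.head hQ (hPQ (h.mem_path hwv).1), hPQ (h.mem_path hwv).2⟩
    · exact ⟨.refl, hPQ h.reach⟩

theorem exists_of_reflTransGen (hr : ∀ v, ¬ TransGen r v v) (hab : ReflTransGen r a b) :
    ∃ P, IsPathRel r P a b := by
  induction hab using ReflTransGen.head_induction_on with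
  | refl => exact ⟨_, nil b⟩
  | head haa' _ ih =>
    obtain ⟨P, hP⟩ := ih
    exact ⟨_, hP.cons hr haa'⟩

theorem exists_through (hr : ∀ v, ¬ TransGen r v v) (hab : ReflTransGen r a b)
    (hbc : ReflTransGen r b c) : ∃ P, IsPathRel r P a c ∧ ReflTransGen P a b := by
  induction hab using ReflTransGen.head_induction_on with
  | refl =>
    obtain ⟨P, hP⟩ := exists_of_reflTransGen hr hbc
    exact ⟨P, hP, .refl⟩
  | head haa' _ ih =>
    obtain ⟨P, hP, ha'b⟩ := ih
    exact ⟨_, hP.cons hr haa', ReflTransGen.head (.inr ⟨rfl, rfl⟩)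
      (ReflTransGen.mono (fun _ _ => Or.inl) _ _ ha'b)⟩

end IsPathRel

theorem CID.ne_decision_of_mem_utility {V : Type} (G : CID V) {v : V} (hv : v ∈ G.utility) :
    v ≠ G.decision := by
  rintro rfl
  exact G.decision_not_utility hv

namespace SCIM

variable {V : Type} [DecidableEq V] (M : SCIM V)

theorem polMech_decision (π : M.Policy) : M.polMech π M.decision = π := by
  simp [polMech]

theorem polMech_of_ne (π : M.Policy) {v : V} (hv : v ≠ M.decision) :
    M.polMech π v = M.f v hv :=
  dif_neg hv

theorem doMech_single_of_ne (mech : ∀ v, M.Mechanism v) {X : V} (x : M.dom X) {v : V}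
    (hv : v ≠ X) : M.doMech mech (M.single X x) v = mech v := by
  simp [doMech, single, hv]

variable [Fintype V]

theorem solve_eq (mech : ∀ v, M.Mechanism v) (ε : M.Env) (v : V) :
    M.solve mech ε v = mech v (fun w _ => M.solve mech ε w) (ε v) :=
  WellFounded.fix_eq _ _ _

theorem val_decision (π : M.Policy) (ε : M.Env) :
    M.val π ε M.decision = π (M.ctx π ε) (ε M.decision) := by
  rw [val, solve_eq, polMech_decision]
  rfl

theorem valDo_single_self (π : M.Policy) (X : V) (x : M.dom X) (ε : M.Env) :
    M.valDo π (M.single X x) ε X = x := by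
  rw [valDo, solve_eq]
  simp [doMech, single]

end SCIM

noncomputable section PathModel

variable {V : Type} [Fintype V]

def pathCopy (G : CID V) (P : V → V → Prop) (v : V) (pa : ∀ w, G.edge w v → Bool) : Bool :=
  decide (∃ w h, P w v ∧ pa w h = true)

def pathSCIM (G : CID V) (P : V → V → Prop) : SCIM V where
  toCID := G
  dom _ := Bool
  dom_fintype _ := inferInstance
  dom_nonempty _ := inferInstance
  edom _ := PUnit
  edom_fintype _ := inferInstance
  edom_nonempty _ := inferInstance
  utilVal _ b := if b then 1 else 0
  utilVal_inj _ _ a b hab := by cases a <;> cases b <;> simp_all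
  f v _ pa _ := pathCopy G P v pa
  μ _ _ := 1
  μ_nonneg _ _ := zero_le_one
  μ_sum _ := by simp

namespace pathSCIM

variable {G : CID V} {P : V → V → Prop}

local notation "𝓜" => pathSCIM G P

instance : Unique (𝓜).Env := inferInstanceAs (Unique (∀ _ : V, PUnit))

theorem utilVal_true (v : V) : (𝓜).utilVal v true = 1 := rfl

theorem utilVal_false (v : V) : (𝓜).utilVal v false = 0 := rfl

theorem prob_eq_one (ε : (𝓜).Env) : (𝓜).prob ε = 1 :=
  Finset.prod_eq_one fun _ _ => rfl

theorem totUtil_eq {u : V} (hu : u ∈ G.utility) {a : ∀ v, (𝓜).dom v}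
    (ha : ∀ v ∈ G.utility, v ≠ u → a v = false) : (𝓜).totUtil a = (𝓜).utilVal u (a u) :=
  Finset.sum_eq_single_of_mem u hu fun v hv hvu => by rw [ha v hv hvu, utilVal_false]

variable [DecidableEq V]

theorem solve_eq_of_rel {a b : V} (hP : IsPathRel G.edge P a b)
    {mech : ∀ v, (𝓜).Mechanism v} (ε : (𝓜).Env) {w v : V}
    (hm : mech v = fun pa _ => pathCopy G P v pa) (hwv : P w v) :
    (𝓜).solve mech ε v = (𝓜).solve mech ε w := by
  rw [SCIM.solve_eq, hm]
  refine Bool.eq_iff_iff.2 ?_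
  simp only [pathCopy, decide_eq_true_eq]
  constructor
  · rintro ⟨w', -, hw'v, hw'⟩
    rwa [hP.pred_unique hw'v hwv] at hw'
  · exact fun hw => ⟨w, hP.le _ _ hwv, hwv, hw⟩

theorem solve_eq_false {mech : ∀ v, (𝓜).Mechanism v} (ε : (𝓜).Env) {v : V}
    (hm : mech v = fun pa _ => pathCopy G P v pa) (hv : ∀ w, ¬ P w v) :
    (𝓜).solve mech ε v = false := by
  rw [SCIM.solve_eq, hm]
  refine Bool.eq_false_iff.2 ?_
  simp only [pathCopy, ne_eq, decide_eq_true_eq]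
  exact fun ⟨w, _, hwv, _⟩ => hv w hwv

theorem solve_eq_of_reflTransGen {a b : V} (hP : IsPathRel G.edge P a b)
    {mech : ∀ v, (𝓜).Mechanism v} (ε : (𝓜).Env) {c d : V}
    (hm : ∀ v, TransGen P c v → mech v = fun pa _ => pathCopy G P v pa)
    (hcd : ReflTransGen P c d) : (𝓜).solve mech ε d = (𝓜).solve mech ε c := by
  induction hcd with
  | refl => rfl
  | tail hcw hwv ih => rw [solve_eq_of_rel hP ε (hm _ (.tail' hcw hwv)) hwv, ih]

theorem EU_eq (π : (𝓜).Policy) : (𝓜).EU π = (𝓜).totUtil ((𝓜).val π default) := by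
  unfold SCIM.EU
  rw [Fintype.sum_unique, prob_eq_one, one_mul]

theorem polMech_eq_pathCopy (π : (𝓜).Policy) {v : V} (hv : v ≠ G.decision) :
    (𝓜).polMech π v = fun pa _ => pathCopy G P v pa :=
  (𝓜).polMech_of_ne π hv

theorem doMech_eq_pathCopy (π : (𝓜).Policy) {Y : V} (y : (𝓜).dom Y) {v : V} (hvY : v ≠ Y)
    (hv : v ≠ G.decision) :
    (𝓜).doMech ((𝓜).polMech π) ((𝓜).single Y y) v = fun pa _ => pathCopy G P v pa :=
  ((𝓜).doMech_single_of_ne _ y hvY).trans (polMech_eq_pathCopy π hv)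

variable {u : V}

theorem ctx_eq (hP : IsPathRel G.edge P G.decision u) (π : (𝓜).Policy) (ε : (𝓜).Env) :
    (𝓜).ctx π ε = fun _ _ => false :=
  funext₂ fun _ hw =>
    solve_eq_false ε (polMech_eq_pathCopy π fun h => G.acyclic _ (.single (h ▸ hw)))
      fun _ hxw => G.acyclic _ ((hP.transGen_of_rel hxw).tail hw)

theorem ctxProb_eq_one (hP : IsPathRel G.edge P G.decision u) (π : (𝓜).Policy) :
    (𝓜).ctxProb π (fun _ _ => false) = 1 := by
  unfold SCIM.ctxProb
  rw [Fintype.sum_unique, if_pos (ctx_eq hP π _), prob_eq_one]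

theorem condExp_eq (hP : IsPathRel G.edge P G.decision u) (π : (𝓜).Policy)
    (g : (𝓜).Env → ℝ) : (𝓜).condExp π (fun _ _ => false) g = g default := by
  unfold SCIM.condExp
  rw [Fintype.sum_unique, if_pos (ctx_eq hP π _), prob_eq_one, ctxProb_eq_one hP, one_mul,
    div_one]

theorem solve_utility_eq_false (hP : IsPathRel G.edge P G.decision u)
    {mech : ∀ v, (𝓜).Mechanism v} (ε : (𝓜).Env) {v : V}
    (hm : mech v = fun pa _ => pathCopy G P v pa) (hv : v ∈ G.utility) (hvu : v ≠ u) :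
    (𝓜).solve mech ε v = false :=
  solve_eq_false ε hm fun _ hwv =>
    hvu (hP.eq_of_reflTransGen_of_sink (hP.mem_path hwv).2 (G.utility_no_children v hv))

theorem totUtil_val (hP : IsPathRel G.edge P G.decision u) (hu : u ∈ G.utility)
    (π : (𝓜).Policy) (ε : (𝓜).Env) :
    (𝓜).totUtil ((𝓜).val π ε) = (𝓜).utilVal u ((𝓜).val π ε (𝓜).decision) := by
  rw [totUtil_eq (a := (𝓜).val π ε) hu fun v hv hvu => solve_utility_eq_false hP ε
    (polMech_eq_pathCopy π (G.ne_decision_of_mem_utility hv)) hv hvu]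
  exact congrArg _ (solve_eq_of_reflTransGen hP ε
    (fun _ hv => polMech_eq_pathCopy π (hP.ne_of_transGen G.acyclic hv)) hP.reach)

theorem nestedU_false_eq_zero (hP : IsPathRel G.edge P G.decision u) (hu : u ∈ G.utility) {X : V}
    (hDX : ReflTransGen P G.decision X) (π : (𝓜).Policy) (ε : (𝓜).Env) :
    (𝓜).nestedU π X false ε = 0 := by
  have hXfalse : (𝓜).valDo π ((𝓜).single (𝓜).decision false) ε X = false :=
    (solve_eq_of_reflTransGen hP ε (fun _ hv => doMech_eq_pathCopy π false
      (hP.ne_of_transGen G.acyclic hv) (hP.ne_of_transGen G.acyclic hv)) hDX).trans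
      ((𝓜).valDo_single_self π (𝓜).decision false ε)
  have hXu := hP.reflTransGen_end hDX
  have hUfalse : (𝓜).valDo π ((𝓜).single X false) ε u = false :=
    (solve_eq_of_reflTransGen hP ε (fun _ hv => doMech_eq_pathCopy π false
      (hP.ne_of_transGen G.acyclic hv)
      (hP.ne_of_transGen G.acyclic (.trans_right hDX hv))) hXu).trans
      ((𝓜).valDo_single_self π X false ε)
  have hne_X : ∀ v ∈ G.utility, v ≠ u → v ≠ X := by
    rintro v hv hvu rfl
    exact hvu (hP.eq_of_reflTransGen_of_sink hXu (G.utility_no_children v hv))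
  unfold SCIM.nestedU
  rw [hXfalse, totUtil_eq (a := (𝓜).valDo π ((𝓜).single X false) ε) hu fun v hv hvu =>
      solve_utility_eq_false hP ε (doMech_eq_pathCopy π false (hne_X v hv hvu)
        (G.ne_decision_of_mem_utility hv)) hv hvu,
    hUfalse, utilVal_false]

theorem val_decision_eq_true_of_optimal (hP : IsPathRel G.edge P G.decision u)
    (hu : u ∈ G.utility) {π : (𝓜).Policy} (hπ : (𝓜).Optimal π) (ε : (𝓜).Env) :
    (𝓜).val π ε (𝓜).decision = true := by
  have hEU (π' : (𝓜).Policy) : (𝓜).EU π' = (𝓜).utilVal u ((𝓜).val π' ε (𝓜).decision) := by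
    rw [EU_eq, Subsingleton.elim default ε, totUtil_val hP hu]
  let πtrue : (𝓜).Policy := fun _ _ => true
  have hπtrue : (𝓜).val πtrue ε (𝓜).decision = true := (𝓜).val_decision πtrue ε
  by_contra hfalse
  have h := hπ πtrue
  rw [hEU, hEU, hπtrue, Bool.eq_false_iff.2 hfalse, utilVal_true, utilVal_false] at h
  exact absurd h (by norm_num)

theorem controlIncentive (hP : IsPathRel G.edge P G.decision u) (hu : u ∈ G.utility) {X : V}
    (hDX : ReflTransGen P G.decision X) : (𝓜).ControlIncentive X := by
  intro π hπ
  refine ⟨fun _ _ => false, by rw [ctxProb_eq_one hP π]; exact one_pos, false, ?_⟩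
  rw [condExp_eq hP, condExp_eq hP, nestedU_false_eq_zero hP hu hDX, totUtil_val hP hu,
    val_decision_eq_true_of_optimal hP hu hπ, utilVal_true]
  exact zero_ne_one

end pathSCIM

end PathModel

theorem control_incentive_criterion_completeness_general
    {V : Type} [Fintype V] [DecidableEq V] (G : CID V) (X : V)
    (h : CICriterion G X) :
    ∃ M : SCIM V, M.toCID = G ∧ M.ControlIncentive X := by
  obtain ⟨hDX, u, hu, hXu⟩ := h
  obtain ⟨P, hP, hDX⟩ := IsPathRel.exists_through G.acyclic hDX hXu
  exact ⟨pathSCIM G P, rfl, pathSCIM.controlIncentive hP hu hDX⟩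

/-- **Control incentive graphical criterion: completeness.**
If a single-decision CID `G` has a directed path `D ⇝ X ⇝ U` to some utility node `U`,
then some SCIM compatible with `G` has a control incentive on `X ≠ D`. -/
theorem control_incentive_criterion_completeness
    {V : Type} [Fintype V] [DecidableEq V] (G : CID V) (X : V) (hX : X ≠ G.decision)
    (h : CICriterion G X) :
    ∃ M : SCIM V, M.toCID = G ∧ M.ControlIncentive X :=
  control_incentive_criterion_completeness_general G X h
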